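/- Let ε = (ε_ij) be a smooth symmetric second-order tensor field on ℝ³, let W_ijkl = ∂_l∂_k ε_ij − ∂_l∂_i ε_jk + ∂_i∂_j ε_kl − ∂_k∂_j ε_il be its Saint-Venant tensor, and let (Inc ε)_kl = Σ_{p,i,r,j} ϵ_kpi ϵ_lrj ∂_p∂_r ε_ij be its incompatibility tensor, where ϵ is the Levi-Civita symbol. Then (Inc ε)_kl = −Σ_{i} W_iikl + S δ_kl for all k, l, where S := (1/2) Σ_{i,k} W_iikk; moreover S = Σ_k (Inc ε)_kk. -/

import Mathlib

/-- The partial derivative `∂_i f` of a scalar field on `ℝ³`. -/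
noncomputable def pd (i : Fin 3) (f : (Fin 3 → ℝ) → ℝ) : (Fin 3 → ℝ) → ℝ :=
  fun x => fderiv ℝ f x (Pi.single i 1)

/-- The Levi-Civita symbol `ϵ_ijk` on three indices. -/
noncomputable def lc3 (i j k : Fin 3) : ℝ :=
  (((i : ℕ) : ℝ) - ((j : ℕ) : ℝ)) * (((j : ℕ) : ℝ) - ((k : ℕ) : ℝ))
    * (((k : ℕ) : ℝ) - ((i : ℕ) : ℝ)) / 2

/-- The Kronecker symbol `δ_ij`. -/
noncomputable def kron (i j : Fin 3) : ℝ := if i = j then 1 else 0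

/-- The Saint-Venant tensor
`W_ijkl = ∂_l∂_k ε_ij − ∂_l∂_i ε_jk + ∂_i∂_j ε_kl − ∂_k∂_j ε_il`. -/
noncomputable def SV (ε : Fin 3 → Fin 3 → (Fin 3 → ℝ) → ℝ) (i j k l : Fin 3) :
    (Fin 3 → ℝ) → ℝ :=
  fun x => pd l (pd k (ε i j)) x - pd l (pd i (ε j k)) x
    + pd i (pd j (ε k l)) x - pd k (pd j (ε i l)) x

/-- The incompatibility tensor `(Inc ε)_kl = Σ ϵ_kpi ϵ_lrj ∂_p∂_r ε_ij`. -/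
noncomputable def Inc (ε : Fin 3 → Fin 3 → (Fin 3 → ℝ) → ℝ) (k l : Fin 3) :
    (Fin 3 → ℝ) → ℝ :=
  fun x => ∑ p, ∑ i, ∑ r, ∑ j, lc3 k p i * lc3 l r j * pd p (pd r (ε i j)) x

lemma pd_pd (f : (Fin 3 → ℝ) → ℝ) (hf : ContDiff ℝ (⊤ : ℕ∞) f) (p r : Fin 3) (x : Fin 3 → ℝ) :
    pd p (pd r f) x = fderiv ℝ (fderiv ℝ f) x (Pi.single p 1) (Pi.single r 1) := by
  have hdc : DifferentiableAt ℝ (fderiv ℝ f) x := by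
    have := (hf.fderiv_right (m := (⊤ : ℕ∞)) (by simp)).differentiable (by simp)
    exact this x
  show fderiv ℝ (fun y => (fderiv ℝ f y) (Pi.single r 1)) x (Pi.single p 1) = _
  rw [fderiv_clm_apply hdc (differentiableAt_const _)]
  simp

lemma pd_comm (f : (Fin 3 → ℝ) → ℝ) (hf : ContDiff ℝ (⊤ : ℕ∞) f) (p r : Fin 3) (x : Fin 3 → ℝ) :
    pd p (pd r f) x = pd r (pd p f) x := by
  rw [pd_pd f hf, pd_pd f hf]
  exact (hf.contDiffAt.isSymmSndFDerivAt (by rw [minSmoothness_of_isRCLikeNormedField]; exact WithTop.coe_le_coe.mpr (le_top : (2 : ℕ∞) ≤ ⊤))).eq _ _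

set_option maxHeartbeats 2000000 in
lemma key1 (D : Fin 3 → Fin 3 → Fin 3 → Fin 3 → ℝ)
    (h1 : ∀ p r i j, D p r i j = D r p i j)
    (h2 : ∀ p r i j, D p r i j = D p r j i) (k l : Fin 3) :
    (∑ p, ∑ i, ∑ r, ∑ j, lc3 k p i * lc3 l r j * D p r i j)
      = -(∑ i, (D l k i i - D l i i k + D i i k l - D k i i l))
        + ((1/2) * ∑ i, ∑ m, (D m m i i - D m i i m + D i i m m - D m i i m)) * kron k l := by
  have s1 : ∀ i j, D 1 0 i j = D 0 1 i j := fun i j => h1 1 0 i j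
  have s2 : ∀ i j, D 2 0 i j = D 0 2 i j := fun i j => h1 2 0 i j
  have s3 : ∀ i j, D 2 1 i j = D 1 2 i j := fun i j => h1 2 1 i j
  have t1 : ∀ p r, D p r 1 0 = D p r 0 1 := fun p r => h2 p r 1 0
  have t2 : ∀ p r, D p r 2 0 = D p r 0 2 := fun p r => h2 p r 2 0
  have t3 : ∀ p r, D p r 2 1 = D p r 1 2 := fun p r => h2 p r 2 1
  have e0 : ∀ h, (⟨0, h⟩ : Fin 3) = 0 := fun _ => rfl
  have e1 : ∀ h, (⟨1, h⟩ : Fin 3) = 1 := fun _ => rfl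
  have e2 : ∀ h, (⟨2, h⟩ : Fin 3) = 2 := fun _ => rfl
  fin_cases k <;> fin_cases l <;>
    · simp only [e0, e1, e2, Fin.sum_univ_three]
      norm_num [lc3, kron, Fin.ext_iff]
      simp only [s1, s2, s3, t1, t2, t3]
      ring

set_option maxHeartbeats 2000000 in
lemma key2 (D : Fin 3 → Fin 3 → Fin 3 → Fin 3 → ℝ)
    (h1 : ∀ p r i j, D p r i j = D r p i j)
    (h2 : ∀ p r i j, D p r i j = D p r j i) :
    (1/2) * (∑ i, ∑ m, (D m m i i - D m i i m + D i i m m - D m i i m))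
      = ∑ k, ∑ p, ∑ i, ∑ r, ∑ j, lc3 k p i * lc3 k r j * D p r i j := by
  have s1 : ∀ i j, D 1 0 i j = D 0 1 i j := fun i j => h1 1 0 i j
  have s2 : ∀ i j, D 2 0 i j = D 0 2 i j := fun i j => h1 2 0 i j
  have s3 : ∀ i j, D 2 1 i j = D 1 2 i j := fun i j => h1 2 1 i j
  have t1 : ∀ p r, D p r 1 0 = D p r 0 1 := fun p r => h2 p r 1 0
  have t2 : ∀ p r, D p r 2 0 = D p r 0 2 := fun p r => h2 p r 2 0
  have t3 : ∀ p r, D p r 2 1 = D p r 1 2 := fun p r => h2 p r 2 1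
  simp only [Fin.sum_univ_three]
  norm_num [lc3]
  simp only [s1, s2, s3, t1, t2, t3]
  ring

/-- The incompatibility tensor is determined by the trace of the Saint-Venant
tensor: `(Inc ε)_kl = −Σ_i W_iikl + S δ_kl` with `S = (1/2) Σ_{i,k} W_iikk`;
moreover `S = Σ_k (Inc ε)_kk`. -/
theorem inc_eq_trace_saint_venant
    (ε : Fin 3 → Fin 3 → (Fin 3 → ℝ) → ℝ)
    (hsm : ∀ i j, ContDiff ℝ (⊤ : ℕ∞) (ε i j))
    (hsym : ∀ i j, ε i j = ε j i) :
    (∀ (k l : Fin 3) (x : Fin 3 → ℝ),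
        Inc ε k l x = -(∑ i, SV ε i i k l x)
          + ((1/2) * ∑ i, ∑ m, SV ε i i m m x) * kron k l) ∧
    (∀ x : Fin 3 → ℝ,
        (1/2) * ∑ i, ∑ m, SV ε i i m m x = ∑ k, Inc ε k k x) := by
  have hD1 : ∀ (x : Fin 3 → ℝ) (p r i j : Fin 3),
      pd p (pd r (ε i j)) x = pd r (pd p (ε i j)) x :=
    fun x p r i j => pd_comm (ε i j) (hsm i j) p r x
  have hD2 : ∀ (x : Fin 3 → ℝ) (p r i j : Fin 3),
      pd p (pd r (ε i j)) x = pd p (pd r (ε j i)) x :=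
    fun x p r i j => by rw [hsym i j]
  constructor
  · intro k l x
    exact key1 (fun p r i j => pd p (pd r (ε i j)) x) (hD1 x) (hD2 x) k l
  · intro x
    exact key2 (fun p r i j => pd p (pd r (ε i j)) x) (hD1 x) (hD2 x)
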